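/- arXiv:1505.06620 — 7 statements merged into one kernel-verified Lean document; each statement's English description precedes it below -/
import Mathlib

section
/- Let L be a finite-dimensional subspace of L²([0,1]). Then the set E_L = { (t₁,t₂) : 0 ≤ t₁ < t₂ ≤ 1 and the equivalence class of 𝟙_{[t₁,t₂]} belongs to L } is finite. -/
open MeasureTheory

noncomputable def μ01 : Measure ℝ := volume.restrict (Set.Icc 0 1)

noncomputable abbrev L2 : Type := Lp ℝ 2 μ01

lemma μ01_Icc_ne_top (a b : ℝ) : μ01 (Set.Icc a b) ≠ ⊤ :=
  ((Measure.restrict_apply_le _ _).trans_lt measure_Icc_lt_top).ne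

/-- The element of `L²([0,1])` given by the indicator of `[a,b]`. -/
noncomputable def ind (a b : ℝ) : L2 :=
  indicatorConstLp 2 measurableSet_Icc (μ01_Icc_ne_top a b) (1 : ℝ)

/-!
The indicators of `E_L` need not be linearly independent (`𝟙[0,1] = 𝟙[0,½] + 𝟙[½,1]` a.e.), but
they are along any family with distinct left endpoints, and along any family with a common left
endpoint and distinct right endpoints: every finite subfamily has a member containing a test
interval `[u,w]` of positive length that meets the other members in at most one point, and pairing
with `𝟙[u,w]` peels that member off. So the set of left endpoints of `E_L` is finite, and so is each
fibre over a left endpoint.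
-/

theorem linearIndependent_of_forall_exists_separating {R M ι : Type*} [Ring R] [NoZeroDivisors R]
    [AddCommGroup M] [Module R M] {v : ι → M}
    (h : ∀ t : Finset ι, t.Nonempty →
      ∃ i ∈ t, ∃ f : M →ₗ[R] R, f (v i) ≠ 0 ∧ ∀ j ∈ t, j ≠ i → f (v j) = 0) :
    LinearIndependent R v := by
  classical
  refine linearIndependent_iff'.mpr fun s ↦ ?_
  induction s using Finset.strongInduction with
  | H s ih =>
    intro g hsum i hi
    obtain ⟨k, hk, f, hfk, hf⟩ := h s ⟨i, hi⟩
    have hgk : g k = 0 := by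
      have hfsum : f (∑ j ∈ s, g j • v j) = g k * f (v k) := by
        rw [map_sum, Finset.sum_eq_single_of_mem k hk fun j hj hjk ↦ by simp [hf j hj hjk],
          map_smul, smul_eq_mul]
      rw [hsum, map_zero] at hfsum
      exact (mul_eq_zero.mp hfsum.symm).resolve_right hfk
    obtain rfl | hik := eq_or_ne i k
    · exact hgk
    · refine ih _ (s.erase_ssubset hk) g ?_ i (Finset.mem_erase.mpr ⟨hik, hi⟩)
      rwa [Finset.sum_erase _ (by simp [hgk])]

theorem finite_of_linearIndependent_of_forall_mem {R V ι : Type*} [Ring R] [StrongRankCondition R]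
    [AddCommGroup V] [Module R V] {L : Submodule R V} [Module.Finite R L] {v : ι → V}
    (hv : LinearIndependent R v) (hvL : ∀ i, v i ∈ L) : Finite ι :=
  have hv' : LinearIndependent R (L.subtype ∘ fun i ↦ (⟨v i, hvL i⟩ : L)) := hv
  hv'.of_comp.finite

lemma inner_ind_ind (u w a b : ℝ) :
    inner ℝ (ind u w) (ind a b) = μ01.real (Set.Icc a b ∩ Set.Icc u w) := by
  rw [ind, ind, L2.inner_indicatorConstLp_one measurableSet_Icc (μ01_Icc_ne_top u w),
    setIntegral_indicatorConstLp measurableSet_Icc measurableSet_Icc (μ01_Icc_ne_top a b) (1 : ℝ)]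
  simp

lemma inner_ind_ind_eq_zero {u w a b : ℝ} (h : w ≤ a ∨ b ≤ u) :
    inner ℝ (ind u w) (ind a b) = 0 := by
  have hle : min b w ≤ max a u := by
    rcases h with h | h
    · exact (min_le_right _ _).trans (h.trans (le_max_left _ _))
    · exact (min_le_left _ _).trans (h.trans (le_max_right _ _))
  rw [inner_ind_ind, Set.Icc_inter_Icc, Measure.real, μ01,
    (Set.subsingleton_Icc_of_ge hle).measure_zero, ENNReal.toReal_zero]

lemma inner_ind_ind_of_subset {u w a b : ℝ} (h0 : 0 ≤ u) (huw : u ≤ w) (hw1 : w ≤ 1)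
    (hau : a ≤ u) (hwb : w ≤ b) :
    inner ℝ (ind u w) (ind a b) = w - u := by
  rw [inner_ind_ind, Set.inter_eq_right.mpr (Set.Icc_subset_Icc hau hwb), μ01,
    measureReal_restrict_apply measurableSet_Icc,
    Set.inter_eq_left.mpr (Set.Icc_subset_Icc h0 hw1), Real.volume_real_Icc_of_le huw]

lemma linearIndependent_ind_of_forall_exists_isolating {ι : Type*} (a b : ι → ℝ)
    (h : ∀ t : Finset ι, t.Nonempty → ∃ i ∈ t, ∃ u w : ℝ,
      0 ≤ u ∧ u < w ∧ w ≤ 1 ∧ a i ≤ u ∧ w ≤ b i ∧ ∀ j ∈ t, j ≠ i → w ≤ a j ∨ b j ≤ u) :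
    LinearIndependent ℝ fun i ↦ ind (a i) (b i) := by
  refine linearIndependent_of_forall_exists_separating fun t ht ↦ ?_
  obtain ⟨i, hi, u, w, h0u, huw, hw1, hau, hwb, hsep⟩ := h t ht
  refine ⟨i, hi, innerₛₗ ℝ (ind u w), ?_, fun j hj hji ↦ ?_⟩
  · rw [innerₛₗ_apply_apply, inner_ind_ind_of_subset h0u huw.le hw1 hau hwb]
    exact sub_ne_zero.mpr huw.ne'
  · rw [innerₛₗ_apply_apply, inner_ind_ind_eq_zero (hsep j hj hji)]

/-- The test interval of the leftmost member runs up to the next left endpoint. -/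
lemma linearIndependent_ind_of_injective_left {ι : Type*} {a b : ι → ℝ}
    (ha : Function.Injective a) (h0 : ∀ i, 0 ≤ a i) (hab : ∀ i, a i < b i) (h1 : ∀ i, b i ≤ 1) :
    LinearIndependent ℝ fun i ↦ ind (a i) (b i) := by
  classical
  refine linearIndependent_ind_of_forall_exists_isolating a b fun t ht ↦ ?_
  obtain ⟨i, hi, hmin⟩ := t.exists_min_image a ht
  set W := insert (b i) ((t.erase i).image a)
  have hW : W.Nonempty := Finset.insert_nonempty _ _
  have hWb : W.min' hW ≤ b i := W.min'_le _ (Finset.mem_insert_self _ _)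
  refine ⟨i, hi, a i, W.min' hW, h0 i, ?_, hWb.trans (h1 i), le_rfl, hWb, fun j hj hji ↦ ?_⟩
  · refine (Finset.lt_min'_iff _ _).mpr fun x hx ↦ ?_
    obtain rfl | hx := Finset.mem_insert.mp hx
    · exact hab i
    obtain ⟨j, hj, rfl⟩ := Finset.mem_image.mp hx
    exact (hmin j (Finset.mem_of_mem_erase hj)).lt_of_ne (ha.ne (Finset.ne_of_mem_erase hj).symm)
  · exact Or.inl (W.min'_le _ (Finset.mem_insert_of_mem
      (Finset.mem_image_of_mem a (Finset.mem_erase.mpr ⟨hji, hj⟩))))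

/-- The test interval of the longest member starts at the next right endpoint. -/
lemma linearIndependent_ind_of_injective_right {ι : Type*} {x : ℝ} {b : ι → ℝ}
    (hb : Function.Injective b) (h0 : 0 ≤ x) (hxb : ∀ i, x < b i) (h1 : ∀ i, b i ≤ 1) :
    LinearIndependent ℝ fun i ↦ ind x (b i) := by
  classical
  refine linearIndependent_ind_of_forall_exists_isolating (fun _ ↦ x) b fun t ht ↦ ?_
  obtain ⟨i, hi, hmax⟩ := t.exists_max_image b ht
  set U := insert x ((t.erase i).image b)
  have hU : U.Nonempty := Finset.insert_nonempty _ _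
  have hxU : x ≤ U.max' hU := U.le_max' _ (Finset.mem_insert_self _ _)
  refine ⟨i, hi, U.max' hU, b i, h0.trans hxU, ?_, h1 i, hxU, le_rfl, fun j hj hji ↦ ?_⟩
  · refine (Finset.max'_lt_iff _ _).mpr fun y hy ↦ ?_
    obtain rfl | hy := Finset.mem_insert.mp hy
    · exact hxb i
    obtain ⟨j, hj, rfl⟩ := Finset.mem_image.mp hy
    exact (hmax j (Finset.mem_of_mem_erase hj)).lt_of_ne (hb.ne (Finset.ne_of_mem_erase hj))
  · exact Or.inr (U.le_max' _ (Finset.mem_insert_of_mem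
      (Finset.mem_image_of_mem b (Finset.mem_erase.mpr ⟨hji, hj⟩))))

def indicatorEndpoints (L : Submodule ℝ L2) : Set (ℝ × ℝ) :=
  {p | 0 ≤ p.1 ∧ p.1 < p.2 ∧ p.2 ≤ 1 ∧ ind p.1 p.2 ∈ L}

section indicatorEndpoints

variable (L : Submodule ℝ L2) [FiniteDimensional ℝ L]

theorem finite_image_fst_indicatorEndpoints : (Prod.fst '' indicatorEndpoints L).Finite := by
  choose p hp hpx using fun x : Prod.fst '' indicatorEndpoints L ↦ x.2
  have hinj : Function.Injective fun x ↦ (p x).1 := fun x y hxy ↦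
    Subtype.ext ((hpx x).symm.trans (hxy.trans (hpx y)))
  have hli := linearIndependent_ind_of_injective_left hinj (fun x ↦ (hp x).1) (fun x ↦ (hp x).2.1)
    (fun x ↦ (hp x).2.2.1)
  exact Set.finite_coe_iff.mp
    (finite_of_linearIndependent_of_forall_mem (L := L) hli fun x ↦ (hp x).2.2.2)

theorem finite_indicatorEndpoints_inter_fst_preimage {x : ℝ}
    (hx : x ∈ Prod.fst '' indicatorEndpoints L) :
    (indicatorEndpoints L ∩ Prod.fst ⁻¹' {x}).Finite := by
  set F := indicatorEndpoints L ∩ Prod.fst ⁻¹' {x}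
  have h0 : 0 ≤ x := by
    obtain ⟨q, hq, rfl⟩ := hx
    exact hq.1
  have hF : ∀ p : F, (p : ℝ × ℝ) = (x, (p : ℝ × ℝ).2) := fun p ↦ Prod.ext p.2.2 rfl
  have hE : ∀ p : F, x < (p : ℝ × ℝ).2 ∧ (p : ℝ × ℝ).2 ≤ 1 ∧ ind x (p : ℝ × ℝ).2 ∈ L :=
    fun p ↦ by
      have hp := p.2.1
      rw [hF p] at hp
      exact hp.2
  have hinj : Function.Injective fun p : F ↦ (p : ℝ × ℝ).2 := fun p q hpq ↦
    Subtype.ext (by rw [hF p, hF q]; exact congrArg (Prod.mk x) hpq)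
  exact Set.finite_coe_iff.mp (finite_of_linearIndependent_of_forall_mem (L := L)
    (linearIndependent_ind_of_injective_right hinj h0 (fun p ↦ (hE p).1) (fun p ↦ (hE p).2.1))
    fun p ↦ (hE p).2.2)

end indicatorEndpoints

/-- Lemma 1. For a finite-dimensional subspace `L` of `L²([0,1])`,
the set `E_L = {(t₁,t₂) : 0 ≤ t₁ < t₂ ≤ 1, 𝟙_{[t₁,t₂]} ∈ L}` is finite. -/
theorem indicators_in_finite_dimensional_subspace_finite
    (L : Submodule ℝ L2) (hL : FiniteDimensional ℝ L) :
    {p : ℝ × ℝ | 0 ≤ p.1 ∧ p.1 < p.2 ∧ p.2 ≤ 1 ∧ ind p.1 p.2 ∈ L}.Finite :=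
  Set.Finite.of_finite_fibers Prod.fst (finite_image_fst_indicatorEndpoints L)
    fun _ ↦ finite_indicatorEndpoints_inter_fst_preimage L
end

section
/- Fix 0 ≤ t₁⁰ < t₂⁰ ≤ 1. Then the family of unit vectors (𝟙_{[t₁,t₂]} − 𝟙_{[t₁⁰,t₂⁰]}) / ‖𝟙_{[t₁,t₂]} − 𝟙_{[t₁⁰,t₂⁰]}‖, indexed by pairs (t₁,t₂) with 0 ≤ t₁ < t₂ ≤ 1 and (t₁,t₂) ≠ (t₁⁰,t₂⁰), converges weakly to zero in L²([0,1]) as (t₁,t₂) → (t₁⁰,t₂⁰); that is, for every h ∈ L²([0,1]), the inner product ⟨h, (𝟙_{[t₁,t₂]} − 𝟙_{[t₁⁰,t₂⁰]})/‖𝟙_{[t₁,t₂]} − 𝟙_{[t₁⁰,t₂⁰]}‖⟩ tends to 0 as (t₁,t₂) → (t₁⁰,t₂⁰). -/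
open MeasureTheory

/-!
Once `(t₁, t₂)` is `δ`-close to `(a₀, b₀)`, the difference `𝟙_{[t₁,t₂]} - 𝟙_{[a₀,b₀]}` is
supported in the symmetric difference of the intervals, hence in the `δ`-neighbourhood of the
endpoints `a₀, b₀`. By Cauchy–Schwarz the inner product of `h` with the normalized difference is
then at most the `L²` norm of `h` on that neighbourhood, which tends to `0` with `δ` by absolute
continuity of `∫ |h|²`.
-/

open Metric

section
variable {α 𝕜 E : Type*} [MeasurableSpace α] {μ : Measure α} [RCLike 𝕜]
  [NormedAddCommGroup E] [InnerProductSpace 𝕜 E]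

theorem MeasureTheory.L2.norm_inner_le_eLpNorm_indicator_mul_norm {s : Set α}
    (hs : MeasurableSet s) (f g : Lp E 2 μ) (hg : ∀ᵐ x ∂μ, x ∉ s → g x = 0) :
    ‖(inner 𝕜 f g : 𝕜)‖ ≤ (eLpNorm (s.indicator f) 2 μ).toReal * ‖g‖ := by
  have hf := (Lp.memLp f).indicator hs
  have hinner : (inner 𝕜 f g : 𝕜) = inner 𝕜 (hf.toLp _) g := by
    simp only [L2.inner_def]
    refine integral_congr_ae ?_
    filter_upwards [hf.coeFn_toLp, hg] with x hfx hgx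
    by_cases hx : x ∈ s
    · rw [hfx, Set.indicator_of_mem hx]
    · rw [hgx hx, inner_zero_right, inner_zero_right]
  rw [hinner, ← Lp.norm_toLp _ hf]
  exact norm_inner_le_norm _ _

theorem MeasureTheory.L2.norm_inner_inv_norm_smul_le_eLpNorm_indicator {s : Set α}
    (hs : MeasurableSet s) (f g : Lp E 2 μ) (hg : ∀ᵐ x ∂μ, x ∉ s → g x = 0) :
    ‖(inner 𝕜 f ((‖g‖⁻¹ : 𝕜) • g) : 𝕜)‖ ≤ (eLpNorm (s.indicator f) 2 μ).toReal := by
  rcases eq_or_ne g 0 with rfl | hg0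
  · simp
  rw [inner_smul_right, norm_mul, norm_inv, RCLike.norm_ofReal, abs_norm,
    inv_mul_le_iff₀ (norm_pos_iff.mpr hg0), mul_comm]
  exact L2.norm_inner_le_eLpNorm_indicator_mul_norm hs f g hg
end

theorem Real.symmDiff_Icc_subset_closedBall_union {t₁ t₂ a b δ : ℝ} (h₁ : dist t₁ a ≤ δ)
    (h₂ : dist t₂ b ≤ δ) :
    symmDiff (Set.Icc t₁ t₂) (Set.Icc a b) ⊆ closedBall a δ ∪ closedBall b δ := by
  rw [Real.dist_eq, abs_le] at h₁ h₂
  intro x hx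
  simp only [Set.mem_symmDiff, Set.mem_Icc, Set.mem_union, mem_closedBall, Real.dist_eq,
    abs_le] at hx ⊢
  grind

theorem Real.volume_closedBall_union_closedBall_le (a b δ : ℝ) :
    volume (closedBall a δ ∪ closedBall b δ) ≤ ENNReal.ofReal (4 * δ) := by
  rcases le_or_gt 0 δ with hδ | hδ
  · calc volume (closedBall a δ ∪ closedBall b δ)
        ≤ volume (closedBall a δ) + volume (closedBall b δ) := measure_union_le _ _
      _ = ENNReal.ofReal (4 * δ) := by
        rw [Real.volume_closedBall, Real.volume_closedBall,
          ← ENNReal.ofReal_add (by positivity) (by positivity)]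
        ring_nf
  · simp [closedBall_eq_empty.mpr hδ]

theorem ind_coeFn (a b : ℝ) : ⇑(ind a b) =ᵐ[μ01] (Set.Icc a b).indicator 1 :=
  indicatorConstLp_coeFn

theorem ind_sub_ind_ae_eq_zero_off_symmDiff (t₁ t₂ a b : ℝ) :
    ∀ᵐ x ∂μ01, x ∉ symmDiff (Set.Icc t₁ t₂) (Set.Icc a b) → (ind t₁ t₂ - ind a b) x = 0 := by
  filter_upwards [Lp.coeFn_sub (ind t₁ t₂) (ind a b), ind_coeFn t₁ t₂, ind_coeFn a b]
    with x hsub h₁ h₂ hx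
  rw [hsub, Pi.sub_apply, h₁, h₂, sub_eq_zero]
  rw [Set.mem_symmDiff] at hx
  by_cases ht : x ∈ Set.Icc t₁ t₂ <;> by_cases hab : x ∈ Set.Icc a b <;> simp_all

theorem normalized_indicator_differences_weakly_null_general
    (a0 b0 : ℝ) (h : L2) :
    Filter.Tendsto
      (fun p : ℝ × ℝ =>
        (inner ℝ h (‖ind p.1 p.2 - ind a0 b0‖⁻¹ • (ind p.1 p.2 - ind a0 b0)) : ℝ))
      (nhdsWithin (a0, b0)
        {p : ℝ × ℝ | 0 ≤ p.1 ∧ p.1 < p.2 ∧ p.2 ≤ 1 ∧ p ≠ (a0, b0)})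
      (nhds 0) := by
  refine tendsto_nhdsWithin_of_tendsto_nhds (Metric.tendsto_nhds_nhds.mpr fun ε hε => ?_)
  obtain ⟨η, hη, hsmall⟩ :=
    (Lp.memLp h).eLpNorm_indicator_le one_le_two ENNReal.ofNat_ne_top (half_pos hε)
  refine ⟨η / 4, by positivity, fun p hp => ?_⟩
  rw [Prod.dist_eq, max_lt_iff] at hp
  set T := closedBall a0 (η / 4) ∪ closedBall b0 (η / 4)
  have hT : MeasurableSet T := measurableSet_closedBall.union measurableSet_closedBall
  have hμT : μ01 T ≤ ENNReal.ofReal η :=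
    (Measure.restrict_apply_le _ _).trans <| by
      simpa [mul_div_cancel₀] using Real.volume_closedBall_union_closedBall_le a0 b0 (η / 4)
  have hsupp : ∀ᵐ x ∂μ01, x ∉ T → (ind p.1 p.2 - ind a0 b0) x = 0 :=
    (ind_sub_ind_ae_eq_zero_off_symmDiff p.1 p.2 a0 b0).mono fun x hx hxT =>
      hx fun hmem => hxT (Real.symmDiff_Icc_subset_closedBall_union hp.1.le hp.2.le hmem)
  rw [dist_zero_right]
  calc ‖_‖ ≤ (eLpNorm (T.indicator h) 2 μ01).toReal :=
        L2.norm_inner_inv_norm_smul_le_eLpNorm_indicator hT h _ hsupp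
    _ ≤ ε / 2 := ENNReal.toReal_le_of_le_ofReal (by positivity) (hsmall T hT hμT)
    _ < ε := half_lt_self hε

/-- Lemma 2. For fixed `0 ≤ a0 < b0 ≤ 1`, the normalized differences
`(𝟙_{[t₁,t₂]} - 𝟙_{[a0,b0]}) / ‖𝟙_{[t₁,t₂]} - 𝟙_{[a0,b0]}‖` converge weakly to `0`
in `L²([0,1])` as `(t₁,t₂) → (a0,b0)` along pairs with `0 ≤ t₁ < t₂ ≤ 1`,
`(t₁,t₂) ≠ (a0,b0)`. -/
theorem normalized_indicator_differences_weakly_null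
    (a0 b0 : ℝ) (h₁ : 0 ≤ a0) (h₁₂ : a0 < b0) (h₂ : b0 ≤ 1) (h : L2) :
    Filter.Tendsto
      (fun p : ℝ × ℝ =>
        (inner ℝ h (‖ind p.1 p.2 - ind a0 b0‖⁻¹ • (ind p.1 p.2 - ind a0 b0)) : ℝ))
      (nhdsWithin (a0, b0)
        {p : ℝ × ℝ | 0 ≤ p.1 ∧ p.1 < p.2 ∧ p.2 ≤ 1 ∧ p ≠ (a0, b0)})
      (nhds 0) :=
  normalized_indicator_differences_weakly_null_general a0 b0 h
end

section
/- Let S be a compact linear operator on L²([0,1]), let I be the identity operator, and suppose 0 ≤ t₁⁰ < t₂⁰ ≤ 1 with (I+S)𝟙_{[t₁⁰,t₂⁰]} = 0. Then ‖(I+S)𝟙_{[t₁,t₂]}‖² / ‖𝟙_{[t₁,t₂]} − 𝟙_{[t₁⁰,t₂⁰]}‖² → 1 as (t₁,t₂) → (t₁⁰,t₂⁰) along pairs with 0 ≤ t₁ < t₂ ≤ 1 and (t₁,t₂) ≠ (t₁⁰,t₂⁰). -/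
/-!
Put `v = 𝟙_{[t₁,t₂]} - 𝟙_{[t₁⁰,t₂⁰]}` and `w = v / ‖v‖`. As `(I + S)` kills `𝟙_{[t₁⁰,t₂⁰]}`, the
ratio is `‖w + S w‖²`. The unit vector `w` is supported on the symmetric difference of the two
intervals, whose measure tends to `0`, so `⟪g, w⟫ ≤ ‖g 𝟙_{[t₁,t₂] ∆ [t₁⁰,t₂⁰]}‖ → 0` for every `g`:
`w` tends weakly to `0`. A compact operator maps bounded weakly null families to norm null ones,
hence `S w → 0` and `‖w + S w‖ → ‖w‖ = 1`.
-/

open MeasureTheory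

open Filter Set Topology
open scoped symmDiff ENNReal InnerProductSpace

theorem IsCompactOperator.tendsto_zero_of_weakly_tendsto_zero {𝕜 E F ι : Type*} [RCLike 𝕜]
    [NormedAddCommGroup E] [NormedSpace 𝕜 E] [NormedAddCommGroup F] [NormedSpace 𝕜 F]
    {S : E →L[𝕜] F} (hS : IsCompactOperator S) {l : Filter ι} {u : ι → E} {C : ℝ}
    (hu : ∀ᶠ i in l, ‖u i‖ ≤ C)
    (hweak : ∀ φ : StrongDual 𝕜 E, Tendsto (fun i ↦ φ (u i)) l (𝓝 0)) :
    Tendsto (fun i ↦ S (u i)) l (𝓝 0) := by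
  refine (hS.isCompact_closure_image_closedBall C).tendsto_nhds_of_unique_mapClusterPt
    (hu.mono fun i hi ↦ subset_closure ⟨u i, mem_closedBall_zero_iff.2 hi, rfl⟩) fun z _ hz ↦ ?_
  refine SeparatingDual.eq_zero_of_forall_dual_eq_zero (R := 𝕜) fun ψ ↦ ?_
  have hcluster : MapClusterPt (ψ z) l (ψ ∘ fun i ↦ S (u i)) :=
    hz.continuousAt_comp ψ.continuous.continuousAt
  exact eq_of_nhds_neBot (hcluster.neBot.mono (inf_le_inf_left _ (hweak (ψ.comp S))))

theorem tendsto_norm_add_of_norm_eq_one {ι E : Type*} [SeminormedAddCommGroup E] {l : Filter ι}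
    {x y : ι → E} (hx : ∀ᶠ i in l, ‖x i‖ = 1) (hy : Tendsto y l (𝓝 0)) :
    Tendsto (fun i ↦ ‖x i + y i‖) l (𝓝 1) := by
  rw [tendsto_iff_norm_sub_tendsto_zero]
  refine squeeze_zero_norm' ?_ (tendsto_zero_iff_norm_tendsto_zero.1 hy)
  filter_upwards [hx] with i hi
  simpa [← hi] using abs_norm_sub_norm_le (x i + y i) (x i)

theorem norm_sq_div_norm_sub_sq_of_map_eq_zero {𝕜 E F : Type*} [RCLike 𝕜]
    [NormedAddCommGroup E] [NormedSpace 𝕜 E] [NormedAddCommGroup F] [NormedSpace 𝕜 F]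
    (T : E →L[𝕜] F) {x₀ : E} (hx₀ : T x₀ = 0) (x : E) :
    ‖T x‖ ^ 2 / ‖x - x₀‖ ^ 2 = ‖T ((‖x - x₀‖⁻¹ : 𝕜) • (x - x₀))‖ ^ 2 := by
  rw [map_smul, norm_smul, map_sub, hx₀, sub_zero, mul_pow, norm_inv, RCLike.norm_ofReal,
    abs_norm, inv_pow, inv_mul_eq_div]

namespace Set

theorem Icc_symmDiff_Icc_subset (a b c d : ℝ) : Icc a b ∆ Icc c d ⊆ uIcc a c ∪ uIcc b d := by
  intro x hx
  simp only [mem_symmDiff, mem_Icc, mem_union, mem_uIcc] at hx ⊢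
  grind

end Set

theorem Real.volume_Icc_symmDiff_Icc_ne_zero {a b c d : ℝ} (hab : a < b) (hcd : c < d)
    (h : (a, b) ≠ (c, d)) : volume (Icc a b ∆ Icc c d) ≠ 0 := by
  wlog hlt : a < c ∨ (a = c ∧ b < d) generalizing a b c d
  · rw [symmDiff_comm]
    refine this hcd hab h.symm ?_
    grind
  obtain ⟨x, y, hxy, hsub⟩ : ∃ x y, x < y ∧ Ioo x y ⊆ Icc a b ∆ Icc c d := by
    rcases hlt with hac | ⟨rfl, hbd⟩
    · exact ⟨a, min b c, lt_min hab hac, fun z hz ↦ Or.inl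
        ⟨⟨hz.1.le, hz.2.le.trans (min_le_left _ _)⟩,
          fun hz' ↦ (hz.2.trans_le (min_le_right _ _)).not_ge hz'.1⟩⟩
    · exact ⟨b, d, hbd, fun z hz ↦ Or.inr
        ⟨⟨(hab.trans hz.1).le, hz.2.le⟩, fun hz' ↦ hz.1.not_ge hz'.2⟩⟩
  exact (((ENNReal.ofReal_pos.2 (sub_pos.2 hxy)).trans_eq Real.volume_Ioo.symm).trans_le
    (measure_mono hsub)).ne'

theorem Real.tendsto_volume_Icc_symmDiff_Icc (a b : ℝ) :
    Tendsto (fun p : ℝ × ℝ ↦ volume (Icc p.1 p.2 ∆ Icc a b)) (𝓝 (a, b)) (𝓝 0) := by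
  have hbound : Tendsto (fun p : ℝ × ℝ ↦ ENNReal.ofReal |a - p.1| + ENNReal.ofReal |b - p.2|)
      (𝓝 (a, b)) (𝓝 0) := by
    have : Continuous fun p : ℝ × ℝ ↦ ENNReal.ofReal |a - p.1| + ENNReal.ofReal |b - p.2| := by
      have := ENNReal.continuous_ofReal
      fun_prop
    simpa using this.tendsto (a, b)
  refine tendsto_of_tendsto_of_tendsto_of_le_of_le tendsto_const_nhds hbound (fun _ ↦ zero_le)
    fun p ↦ ?_
  calc volume (Icc p.1 p.2 ∆ Icc a b) ≤ volume (uIcc p.1 a ∪ uIcc p.2 b) :=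
        measure_mono (Icc_symmDiff_Icc_subset _ _ _ _)
    _ ≤ volume (uIcc p.1 a) + volume (uIcc p.2 b) := measure_union_le _ _
    _ = ENNReal.ofReal |a - p.1| + ENNReal.ofReal |b - p.2| := by
        rw [Real.volume_interval, Real.volume_interval]

section L2

variable {α : Type*} [MeasurableSpace α] {μ : Measure α}

theorem indicatorConstLp_sub_indicatorConstLp_ne_zero {E : Type*} [NormedAddCommGroup E]
    {p : ℝ≥0∞} [Fact (1 ≤ p)] {s t : Set α} {hs : MeasurableSet s} {ht : MeasurableSet t}
    {hμs : μ s ≠ ∞} {hμt : μ t ≠ ∞} {c : E} (hc : c ≠ 0) (hst : μ (s ∆ t) ≠ 0) :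
    indicatorConstLp p hs hμs c - indicatorConstLp p ht hμt c ≠ 0 := by
  have hp : p ≠ 0 := (one_pos.trans_le Fact.out).ne'
  have hpos : 0 < μ.real (s ∆ t) :=
    ENNReal.toReal_pos hst (measure_symmDiff_ne_top hμs hμt)
  rw [sub_ne_zero, ← dist_ne_zero, dist_indicatorConstLp_eq_norm, norm_indicatorConstLp' hp hst]
  positivity

theorem indicatorConstLp_sub_indicatorConstLp_ae_eq_zero {E : Type*} [NormedAddCommGroup E]
    {p : ℝ≥0∞} {s t : Set α} {hs : MeasurableSet s} {ht : MeasurableSet t}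
    {hμs : μ s ≠ ∞} {hμt : μ t ≠ ∞} {c : E} :
    ∀ᵐ x ∂μ, x ∉ s ∆ t → (indicatorConstLp p hs hμs c - indicatorConstLp p ht hμt c) x = 0 := by
  filter_upwards [Lp.coeFn_sub (indicatorConstLp p hs hμs c) (indicatorConstLp p ht hμt c),
    indicatorConstLp_coeFn (hs := hs) (hμs := hμs) (c := c) (p := p),
    indicatorConstLp_coeFn (hs := ht) (hμs := hμt) (c := c) (p := p)] with x hx hxs hxt hst
  rw [hx, Pi.sub_apply, hxs, hxt]
  by_cases h : x ∈ s <;> simp_all [mem_symmDiff]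

theorem abs_inner_le_sqrt_setIntegral_mul_norm {s : Set α} (hs : MeasurableSet s)
    (g : Lp ℝ 2 μ) {f : Lp ℝ 2 μ} (hf : ∀ᵐ x ∂μ, x ∉ s → f x = 0) :
    |⟪g, f⟫_ℝ| ≤ √(∫ x in s, g x ^ 2 ∂μ) * ‖f‖ := by
  set gs : Lp ℝ 2 μ := ((Lp.memLp g).indicator hs).toLp
  have hgs : gs =ᵐ[μ] s.indicator g := MemLp.coeFn_toLp _
  have hinner : ⟪g, f⟫_ℝ = ⟪gs, f⟫_ℝ := by
    refine integral_congr_ae ?_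
    filter_upwards [hf, hgs] with x hfx hgx
    by_cases hx : x ∈ s <;> simp [hx, hfx, hgx]
  have hnorm : ‖gs‖ = √(∫ x in s, g x ^ 2 ∂μ) := by
    rw [← Real.sqrt_sq (norm_nonneg gs), ← real_inner_self_eq_norm_sq, L2.inner_def,
      ← integral_indicator hs]
    congr 1
    refine integral_congr_ae ?_
    filter_upwards [hgs] with x hx
    by_cases hxs : x ∈ s <;> simp [hx, hxs, sq]
  rw [hinner, ← hnorm]
  exact abs_real_inner_le_norm gs f

theorem tendsto_inner_smul_inv_norm_of_measure_support {ι : Type*} {l : Filter ι}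
    {f : ι → Lp ℝ 2 μ} {s : ι → Set α} (hs : ∀ i, MeasurableSet (s i))
    (hf : ∀ i, ∀ᵐ x ∂μ, x ∉ s i → f i x = 0) (hμ : Tendsto (μ ∘ s) l (𝓝 0)) (g : Lp ℝ 2 μ) :
    Tendsto (fun i ↦ ⟪g, ‖f i‖⁻¹ • f i⟫_ℝ) l (𝓝 0) := by
  have hint : Tendsto (fun i ↦ √(∫ x in s i, g x ^ 2 ∂μ)) l (𝓝 0) := by
    simpa using ((Lp.memLp g).integrable_sq.tendsto_setIntegral_nhds_zero hμ).sqrt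
  refine squeeze_zero_norm (fun i ↦ ?_) hint
  rw [inner_smul_right, Real.norm_eq_abs, abs_mul, abs_inv, abs_norm]
  calc ‖f i‖⁻¹ * |⟪g, f i⟫_ℝ| ≤ ‖f i‖⁻¹ * (√(∫ x in s i, g x ^ 2 ∂μ) * ‖f i‖) := by
        gcongr
        exact abs_inner_le_sqrt_setIntegral_mul_norm (hs i) g (hf i)
    _ ≤ √(∫ x in s i, g x ^ 2 ∂μ) := by
        rcases eq_or_ne ‖f i‖ 0 with h | h
        · simp [h]
        · rw [mul_left_comm, inv_mul_cancel₀ h, mul_one]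

end L2

theorem μ01_Icc_symmDiff_Icc_ne_zero {a b c d : ℝ} (ha : 0 ≤ a) (hab : a < b) (hb : b ≤ 1)
    (hc : 0 ≤ c) (hcd : c < d) (hd : d ≤ 1) (h : (a, b) ≠ (c, d)) :
    μ01 (Icc a b ∆ Icc c d) ≠ 0 := by
  have hsub : Icc a b ∆ Icc c d ⊆ Icc 0 1 :=
    symmDiff_le_sup.trans (union_subset (Icc_subset_Icc ha hb) (Icc_subset_Icc hc hd))
  rw [μ01, Measure.restrict_eq_self _ hsub]
  exact Real.volume_Icc_symmDiff_Icc_ne_zero hab hcd h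

/-- Lemma 3. If `S` is a compact operator on `L²([0,1])` and
`(I+S)𝟙_{[t₁⁰,t₂⁰]} = 0` for some `0 ≤ t₁⁰ < t₂⁰ ≤ 1`, then
`‖(I+S)𝟙_{[t₁,t₂]}‖² / ‖𝟙_{[t₁,t₂]} - 𝟙_{[t₁⁰,t₂⁰]}‖² → 1` as `(t₁,t₂) → (t₁⁰,t₂⁰)`
along pairs with `0 ≤ t₁ < t₂ ≤ 1`, `(t₁,t₂) ≠ (t₁⁰,t₂⁰)`. -/
theorem norm_ratio_tendsto_one
    (S : L2 →L[ℝ] L2) (hS : IsCompactOperator S)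
    (a0 b0 : ℝ) (h₁ : 0 ≤ a0) (h₁₂ : a0 < b0) (h₂ : b0 ≤ 1)
    (hker : (ContinuousLinearMap.id ℝ L2 + S) (ind a0 b0) = 0) :
    Filter.Tendsto
      (fun p : ℝ × ℝ =>
        ‖(ContinuousLinearMap.id ℝ L2 + S) (ind p.1 p.2)‖ ^ 2 /
          ‖ind p.1 p.2 - ind a0 b0‖ ^ 2)
      (nhdsWithin (a0, b0)
        {p : ℝ × ℝ | 0 ≤ p.1 ∧ p.1 < p.2 ∧ p.2 ≤ 1 ∧ p ≠ (a0, b0)})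
      (nhds 1) := by
  set F := 𝓝[{p : ℝ × ℝ | 0 ≤ p.1 ∧ p.1 < p.2 ∧ p.2 ≤ 1 ∧ p ≠ (a0, b0)}] (a0, b0)
  set v : ℝ × ℝ → L2 := fun p ↦ ind p.1 p.2 - ind a0 b0
  set u : ℝ × ℝ → L2 := fun p ↦ ‖v p‖⁻¹ • v p
  have hu : ∀ᶠ p in F, ‖u p‖ = 1 := eventually_nhdsWithin_of_forall
    fun p ⟨hp₁, hp₁₂, hp₂, hp⟩ ↦ norm_smul_inv_norm (𝕜 := ℝ) <|
      indicatorConstLp_sub_indicatorConstLp_ne_zero one_ne_zero <|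
        μ01_Icc_symmDiff_Icc_ne_zero hp₁ hp₁₂ hp₂ h₁ h₁₂ h₂ hp
  have hμ : Tendsto (fun p : ℝ × ℝ ↦ μ01 (Icc p.1 p.2 ∆ Icc a0 b0)) F (𝓝 0) :=
    tendsto_of_tendsto_of_tendsto_of_le_of_le tendsto_const_nhds
      ((Real.tendsto_volume_Icc_symmDiff_Icc a0 b0).mono_left nhdsWithin_le_nhds)
      (fun _ ↦ zero_le) fun _ ↦ Measure.restrict_apply_le _ _
  have hweak (g : L2) : Tendsto (fun p ↦ ⟪g, u p⟫_ℝ) F (𝓝 0) :=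
    tendsto_inner_smul_inv_norm_of_measure_support
      (fun _ ↦ measurableSet_Icc.symmDiff measurableSet_Icc)
      (fun _ ↦ indicatorConstLp_sub_indicatorConstLp_ae_eq_zero) hμ g
  have hSu : Tendsto (fun p ↦ S (u p)) F (𝓝 0) :=
    hS.tendsto_zero_of_weakly_tendsto_zero (hu.mono fun _ h ↦ h.le) fun φ ↦ by
      simpa only [InnerProductSpace.toDual_symm_apply] using
        hweak ((InnerProductSpace.toDual ℝ L2).symm φ)
  rw [← one_pow 2]
  refine ((tendsto_norm_add_of_norm_eq_one hu hSu).pow 2).congr fun p ↦ ?_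
  rw [norm_sq_div_norm_sub_sq_of_map_eq_zero _ hker]
  rfl
end

section
/- Let H be a real Hilbert space, let L be a finite-dimensional subspace of H with orthonormal basis e₁,…,e_m, and let P be the orthogonal projection onto L. Then for any g₁,…,g_k ∈ H, G(g₁ − P g₁, …, g_k − P g_k) = G(g₁, …, g_k, e₁, …, e_m). -/
/-- Gram determinant of a finite family of vectors. -/
noncomputable def gram {H : Type*} [NormedAddCommGroup H] [InnerProductSpace ℝ H]
    {n : ℕ} (v : Fin n → H) : ℝ :=
  (Matrix.of fun i j => (inner ℝ (v i) (v j) : ℝ)).det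

/-!
Write `B = (⟪gᵢ, eₗ⟫)`. Since the `eₗ` are orthonormal, the Gram matrix of `(g, e)` is the block
matrix `[[G(g), B], [Bᴴ, 1]]`, whose determinant is that of the Schur complement `G(g) - B Bᴴ`.
On the other hand `P x = ∑ₗ ⟪eₗ, x⟫ eₗ` and `P` is a self-adjoint idempotent, so
`⟪gᵢ - P gᵢ, gⱼ - P gⱼ⟫ = ⟪gᵢ, gⱼ⟫ - ∑ₗ ⟪gᵢ, eₗ⟫ ⟪eₗ, gⱼ⟫`, the entries of the same Schur complement.
-/

open Matrix Submodule
open scoped InnerProductSpace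

section

variable {𝕜 E ι κ : Type*} [RCLike 𝕜] [NormedAddCommGroup E] [InnerProductSpace 𝕜 E]

namespace Matrix

theorem gram_sumElim (u : ι → E) (v : κ → E) :
    gram 𝕜 (Sum.elim u v) =
      fromBlocks (gram 𝕜 u) (of fun i l ↦ ⟪u i, v l⟫_𝕜) (of fun l i ↦ ⟪v l, u i⟫_𝕜)
        (gram 𝕜 v) := by
  ext (i | i) (j | j) <;> rfl

theorem det_gram_append {m n : ℕ} (u : Fin m → E) (v : Fin n → E) :
    (gram 𝕜 (Fin.append u v)).det = (gram 𝕜 (Sum.elim u v)).det := by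
  rw [← Fin.append_comp_sumElim, ← det_submatrix_equiv_self finSumFinEquiv]
  rfl

theorem det_gram_sumElim_of_orthonormal [Fintype ι] [Fintype κ] [DecidableEq ι] [DecidableEq κ]
    (u : ι → E) {v : κ → E} (hv : Orthonormal 𝕜 v) :
    (gram 𝕜 (Sum.elim u v)).det =
      (gram 𝕜 u - (of fun i l ↦ ⟪u i, v l⟫_𝕜) * of fun l j ↦ ⟪v l, u j⟫_𝕜).det := by
  rw [gram_sumElim, gram_eq_one_iff_orthonormal.mpr hv, det_fromBlocks_one₂₂]

end Matrix

theorem Orthonormal.exists_orthonormalBasis_span [Fintype ι] {v : ι → E}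
    (hv : Orthonormal 𝕜 v) :
    ∃ b : OrthonormalBasis ι 𝕜 (span 𝕜 (Set.range v)), ∀ i, (b i : E) = v i := by
  refine ⟨(Module.Basis.span hv.linearIndependent).toOrthonormalBasis ?_, fun i ↦ ?_⟩
  · simpa [Orthonormal, Module.Basis.span_apply] using hv
  · simp [Module.Basis.span_apply]

namespace Submodule

variable (K : Submodule 𝕜 E) [K.HasOrthogonalProjection]

theorem inner_sub_starProjection_sub_starProjection (x y : E) :
    ⟪x - K.starProjection x, y - K.starProjection y⟫_𝕜 =
      ⟪x, y⟫_𝕜 - ⟪x, K.starProjection y⟫_𝕜 := by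
  rw [inner_sub_right, starProjection_inner_eq_zero x _ (K.starProjection_apply_mem y),
    sub_zero, inner_sub_left, inner_starProjection_left_eq_right]

theorem inner_starProjection_eq_sum [Fintype κ] (b : OrthonormalBasis κ 𝕜 K) (x y : E) :
    ⟪x, K.starProjection y⟫_𝕜 = ∑ l, ⟪x, (b l : E)⟫_𝕜 * ⟪(b l : E), y⟫_𝕜 := by
  simp [starProjection_apply, b.orthogonalProjectionOnto_apply_eq_sum, inner_sum,
    inner_smul_right, mul_comm]

theorem gram_sub_starProjection [Fintype κ] (b : OrthonormalBasis κ 𝕜 K) (u : ι → E) :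
    gram 𝕜 (fun i ↦ u i - K.starProjection (u i)) =
      gram 𝕜 u - (of fun i l ↦ ⟪u i, (b l : E)⟫_𝕜) * of fun l j ↦ ⟪(b l : E), u j⟫_𝕜 := by
  ext i j
  simp only [gram_apply, Matrix.sub_apply, mul_apply, of_apply,
    inner_sub_starProjection_sub_starProjection, K.inner_starProjection_eq_sum b]

end Submodule

end

/-- Lemma 4. If `L` is a finite-dimensional subspace of a real Hilbert
space `H` with orthonormal basis `e₁,…,e_m` and `P` is the orthogonal projection onto `L`,
then `G(g₁ - Pg₁, …, g_k - Pg_k) = G(g₁, …, g_k, e₁, …, e_m)` for all `g₁,…,g_k ∈ H`. -/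
theorem gram_of_projection_complement
    {H : Type*} [NormedAddCommGroup H] [InnerProductSpace ℝ H]
    (L : Submodule ℝ H) [FiniteDimensional ℝ L]
    {m : ℕ} (e : Fin m → H) (he : Orthonormal ℝ e)
    (hspan : Submodule.span ℝ (Set.range e) = L)
    {k : ℕ} (g : Fin k → H) :
    gram (fun i => g i - (L.orthogonalProjection (g i) : H)) =
      gram (Fin.append g e) := by
  subst hspan
  obtain ⟨b, hb⟩ := he.exists_orthonormalBasis_span
  change (Matrix.gram ℝ fun i ↦ g i - (span ℝ (Set.range e)).starProjection (g i)).det =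
    (Matrix.gram ℝ (Fin.append g e)).det
  rw [det_gram_append, det_gram_sumElim_of_orthonormal g he, gram_sub_starProjection _ b]
  simp only [hb]
end

section
/- Let B be a continuous linear operator on a real Hilbert space H that has a continuous inverse. Then for every k ≥ 1 there exists a constant c(k) > 0, depending only on k and B, such that for all q₁,…,q_k ∈ H, G(B q₁, …, B q_k) ≥ c(k) · G(q₁, …, q_k). -/
open scoped MatrixOrder ComplexOrder

namespace Matrix

variable {𝕜 n : Type*} [RCLike 𝕜] [Fintype n] [DecidableEq n]

theorem one_le_det_of_one_le {M : Matrix n n 𝕜} (h : 1 ≤ M) : 1 ≤ M.det := by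
  have hM : M.IsHermitian := by
    simpa using (le_iff.1 h).isHermitian.add isHermitian_one
  have one_le_eigenvalues (i : n) : 1 ≤ hM.eigenvalues i :=
    (algebraMap_le_iff_le_spectrum (a := M) hM).1 (by simpa using h) _
      (hM.eigenvalues_mem_spectrum_real i)
  rw [hM.det_eq_prod_eigenvalues, ← RCLike.ofReal_prod, ← RCLike.ofReal_one,
    RCLike.ofReal_le_ofReal]
  exact Finset.one_le_prod fun i _ => one_le_eigenvalues i

theorem det_le_det_of_le {A B : Matrix n n 𝕜} (hA : 0 ≤ A) (hAB : A ≤ B) : A.det ≤ B.det := by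
  rcases (nonneg_iff_posSemidef.1 hA).det_nonneg.eq_or_lt with hA0 | hApos
  · rw [← hA0]
    exact (nonneg_iff_posSemidef.1 (hA.trans hAB)).det_nonneg
  set S := CFC.sqrt A
  have hSS : S * S = A := CFC.sqrt_mul_sqrt_self A hA
  have hSdet : S.det * S.det = A.det := by rw [← det_mul, hSS]
  have hSunit : IsUnit S.det := isUnit_iff_ne_zero.2 fun h => by
    rw [h, zero_mul] at hSdet
    exact hApos.ne hSdet
  have hSinv : IsSelfAdjoint S⁻¹ := IsHermitian.inv (CFC.sqrt_nonneg A).isSelfAdjoint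
  have conj_A : S⁻¹ * A * S⁻¹ = 1 := by
    rw [← hSS, ← mul_assoc, nonsing_inv_mul _ hSunit, one_mul, mul_nonsing_inv _ hSunit]
  have one_le_ratio := one_le_det_of_one_le (conj_A ▸ hSinv.conjugate_le_conjugate hAB)
  rw [det_mul, det_mul, det_nonsing_inv, Ring.inverse_eq_inv', mul_comm, ← mul_assoc,
    ← mul_inv, hSdet, inv_mul_eq_div] at one_le_ratio
  calc A.det = A.det * 1 := (mul_one _).symm
    _ ≤ A.det * (B.det / A.det) := mul_le_mul_of_nonneg_left one_le_ratio hApos.le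
    _ = B.det := mul_div_cancel₀ _ hApos.ne'

end Matrix

section Gram

variable {E F : Type*} [NormedAddCommGroup E] [InnerProductSpace ℝ E]
  [NormedAddCommGroup F] [InnerProductSpace ℝ F] {n : ℕ}

theorem gram_nonneg (v : Fin n → E) : 0 ≤ gram v :=
  (Matrix.posSemidef_gram ℝ v).det_nonneg

theorem gram_map_le (f : E →L[ℝ] F) (v : Fin n → E) :
    gram (fun i => f (v i)) ≤ (‖f‖ ^ 2) ^ n * gram v := by
  have hle : Matrix.gram ℝ (f ∘ v) ≤ ‖f‖ ^ 2 • Matrix.gram ℝ v :=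
    Matrix.le_iff.2 (Matrix.posSemidef_opNorm_smul_gram_sub_gram v f)
  have hdet := Matrix.det_le_det_of_le (Matrix.posSemidef_gram ℝ _).nonneg hle
  rwa [Matrix.det_smul, Fintype.card_fin] at hdet

end Gram

theorem gram_of_invertible_operator_ge_general
    {H : Type*} [NormedAddCommGroup H] [InnerProductSpace ℝ H]
    (B : H →L[ℝ] H) (Binv : H →L[ℝ] H)
    (hleft : Binv.comp B = ContinuousLinearMap.id ℝ H)
    (k : ℕ) :
    ∃ c : ℝ, 0 < c ∧ ∀ q : Fin k → H,
      c * gram q ≤ gram (fun i => B (q i)) := by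
  -- `+ 1` keeps the constant finite when `Binv = 0`, i.e. when `H` is trivial.
  refine ⟨((‖Binv‖ ^ 2 + 1) ^ k)⁻¹, by positivity, fun q => ?_⟩
  have hq : gram q ≤ (‖Binv‖ ^ 2) ^ k * gram (fun i => B (q i)) := by
    simpa [← ContinuousLinearMap.comp_apply, hleft] using gram_map_le Binv (fun i => B (q i))
  rw [inv_mul_le_iff₀ (by positivity)]
  calc gram q ≤ (‖Binv‖ ^ 2) ^ k * gram (fun i => B (q i)) := hq
    _ ≤ (‖Binv‖ ^ 2 + 1) ^ k * gram (fun i => B (q i)) := by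
      gcongr
      · exact gram_nonneg _
      · linarith

/-- Lemma 5. If `B` is a continuously invertible continuous linear
operator on a real Hilbert space `H`, then for every `k ≥ 1` there is a constant
`c(k) > 0` such that `G(Bq₁, …, Bq_k) ≥ c(k)·G(q₁, …, q_k)` for all `q₁,…,q_k ∈ H`. -/
theorem gram_of_invertible_operator_ge
    {H : Type*} [NormedAddCommGroup H] [InnerProductSpace ℝ H] [CompleteSpace H]
    (B : H →L[ℝ] H) (Binv : H →L[ℝ] H)
    (hleft : Binv.comp B = ContinuousLinearMap.id ℝ H)
    (hright : B.comp Binv = ContinuousLinearMap.id ℝ H)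
    (k : ℕ) (hk : 1 ≤ k) :
    ∃ c : ℝ, 0 < c ∧ ∀ q : Fin k → H,
      c * gram q ≤ gram (fun i => B (q i)) :=
  gram_of_invertible_operator_ge_general B Binv hleft k
end

section
/- For every natural number n, the set M_n of elements of L²([0,1]) that have a representative which is a step function with at most n jumps — that is, of the form Σ_{i=0}^{n} c_i 𝟙_{[t_i, t_{i+1})} for some constants c₀,…,c_n and points 0 = t₀ ≤ t₁ ≤ … ≤ t_n ≤ t_{n+1} = 1 — is a closed subset of L²([0,1]). -/
open MeasureTheory

/-!
Let `F k → f` in `L²` with `F k` a step function with jump vector `t k` and values `c k`. The jump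
vectors lie in a compact subset of `ℝ^(n+2)`, so along a subsequence `t k → T`, and along a further
one `F k → f` almost everywhere. A point `x ∈ [0,1]` outside the finite set `range T` lies in some
open interval `(T i, T (i+1))`, hence eventually in `[t k i, t k (i+1))`, where `F k x = c k i`.
So `c k i → f x`, and `f` agrees a.e. with the step function with jumps `T` and values
`lim c k i`.
-/

open Filter Topology Set

theorem exists_mem_Ioo_of_notMem_range {α : Type*} [LinearOrder α] {n : ℕ} (T : Fin (n + 2) → α)
    {x : α} (hx : x ∈ Icc (T 0) (T (Fin.last (n + 1)))) (hxT : x ∉ range T) :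
    ∃ i : Fin (n + 1), x ∈ Ioo (T i.castSucc) (T i.succ) := by
  have hne : ∀ j, T j ≠ x := fun j h => hxT ⟨j, h⟩
  by_contra! h
  -- otherwise, by induction along `Fin`, no `T j` exceeds `x`, so `x = T (Fin.last _)`
  have hle : ∀ j, T j ≤ x :=
    Fin.induction hx.1 fun i hi => not_lt.1 fun hlt => h i ⟨hi.lt_of_ne (hne _), hlt⟩
  exact hne _ ((hle _).antisymm hx.2)

def unitIntervalPartitions (n : ℕ) : Set (Fin (n + 2) → ℝ) :=
  {t | t 0 = 0 ∧ t (Fin.last (n + 1)) = 1 ∧ Monotone t}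

theorem isCompact_unitIntervalPartitions (n : ℕ) : IsCompact (unitIntervalPartitions n) := by
  refine (isCompact_univ_pi fun _ => isCompact_Icc (a := (0 : ℝ)) (b := 1)).of_isClosed_subset
    ((isClosed_eq (continuous_apply _) continuous_const).inter
      ((isClosed_eq (continuous_apply _) continuous_const).inter isClosed_monotone)) ?_
  rintro t ⟨h₀, h₁, hm⟩ i -
  exact ⟨h₀ ▸ hm (Fin.zero_le i), h₁ ▸ hm (Fin.le_last i)⟩

section StepFunction

variable {M : Type*} [AddCommMonoid M] {n : ℕ}

noncomputable def stepFunction (c : Fin (n + 1) → M) (t : Fin (n + 2) → ℝ) (x : ℝ) : M :=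
  ∑ i : Fin (n + 1), (Ico (t i.castSucc) (t i.succ)).indicator (fun _ => c i) x

theorem stepFunction_eq_of_mem_Ico {t : Fin (n + 2) → ℝ} (ht : Monotone t) (c : Fin (n + 1) → M)
    {x : ℝ} {i : Fin (n + 1)} (hx : x ∈ Ico (t i.castSucc) (t i.succ)) :
    stepFunction c t x = c i := by
  refine (Finset.sum_eq_single i (fun j _ hji => indicator_of_notMem ?_ _) (by simp)).trans
    (indicator_of_mem hx _)
  rintro ⟨hjx, hxj⟩
  rcases lt_or_gt_of_ne hji with h | h
  · exact (hxj.trans_le ((ht (Fin.succ_le_castSucc_iff.mpr h)).trans hx.1)).false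
  · exact (hx.2.trans_le ((ht (Fin.succ_le_castSucc_iff.mpr h)).trans hjx)).false

theorem eventually_stepFunction_eq {ι : Type*} {l : Filter ι}
    {t : ι → Fin (n + 2) → ℝ} {T : Fin (n + 2) → ℝ} (hT : Tendsto t l (𝓝 T))
    (ht : ∀ k, Monotone (t k)) (c : ι → Fin (n + 1) → M) {x : ℝ} {i : Fin (n + 1)}
    (hx : x ∈ Ioo (T i.castSucc) (T i.succ)) :
    ∀ᶠ k in l, stepFunction (c k) (t k) x = c k i := by
  filter_upwards [(tendsto_pi_nhds.1 hT i.castSucc).eventually_lt_const hx.1,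
    (tendsto_pi_nhds.1 hT i.succ).eventually_const_lt hx.2] with k hk₁ hk₂
  exact stepFunction_eq_of_mem_Ico (ht k) (c k) ⟨hk₁.le, hk₂⟩

theorem ae_eq_stepFunction_of_tendsto [TopologicalSpace M] [T2Space M] {μ : Measure ℝ}
    [NullSingletonClass μ] {F : ℕ → ℝ → M} {f : ℝ → M}
    {c : ℕ → Fin (n + 1) → M} {t : ℕ → Fin (n + 2) → ℝ} {T : Fin (n + 2) → ℝ}
    (hF : ∀ k, F k =ᵐ[μ] stepFunction (c k) (t k)) (ht : ∀ k, Monotone (t k))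
    (htT : Tendsto t atTop (𝓝 T)) (hμ : ∀ᵐ x ∂μ, x ∈ Icc (T 0) (T (Fin.last (n + 1))))
    (hFf : ∀ᵐ x ∂μ, Tendsto (fun k => F k x) atTop (𝓝 (f x))) :
    f =ᵐ[μ] stepFunction (fun i => limUnder atTop fun k => c k i) T := by
  have hT : ∀ᵐ x ∂μ, x ∉ range T :=
    measure_eq_zero_iff_ae_notMem.1 ((finite_range T).measure_zero μ)
  filter_upwards [ae_all_iff.2 hF, hFf, hμ, hT] with x hFx hfx hxI hxT
  obtain ⟨i, hi⟩ := exists_mem_Ioo_of_notMem_range T hxI hxT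
  have hc : Tendsto (fun k => c k i) atTop (𝓝 (f x)) :=
    hfx.congr' <| (eventually_stepFunction_eq htT ht c hi).mono fun k hk => (hFx k).trans hk
  have hTm : Monotone T := isClosed_monotone.mem_of_tendsto htT (.of_forall ht)
  rw [stepFunction_eq_of_mem_Ico hTm _ (Ioo_subset_Ico_self hi), hc.limUnder_eq]

end StepFunction

instance : NullSingletonClass μ01 := by unfold μ01; infer_instance

/-- Lemma 6. For every `n`, the set of elements of `L²([0,1])` having a
representative of the form `Σ_{i=0}^{n} c_i 𝟙_{[t_i, t_{i+1})}` with
`0 = t₀ ≤ t₁ ≤ … ≤ t_n ≤ t_{n+1} = 1` (step functions with at most `n` jumps) is closed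
in `L²([0,1])`. -/
theorem step_functions_with_bounded_jumps_closed (n : ℕ) :
    IsClosed {f : L2 | ∃ (c : Fin (n + 1) → ℝ) (t : Fin (n + 2) → ℝ),
      t 0 = 0 ∧ t (Fin.last (n + 1)) = 1 ∧ Monotone t ∧
      ⇑f =ᵐ[μ01] fun x => ∑ i : Fin (n + 1),
        Set.indicator (Set.Ico (t i.castSucc) (t i.succ)) (fun _ => c i) x} := by
  refine isSeqClosed_iff_isClosed.1 fun F f hF hFf => ?_
  choose c t ht₀ ht₁ htm hFt using hF
  obtain ⟨T, ⟨hT₀, hT₁, hTm⟩, φ, hφ, htT⟩ :=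
    (isCompact_unitIntervalPartitions n).tendsto_subseq fun k => ⟨ht₀ k, ht₁ k, htm k⟩
  obtain ⟨ψ, hψ, hFf_ae⟩ :=
    (tendstoInMeasure_of_tendsto_Lp (hFf.comp hφ.tendsto_atTop)).exists_seq_tendsto_ae
  have hμ : ∀ᵐ x ∂μ01, x ∈ Icc (T 0) (T (Fin.last (n + 1))) := by
    rw [hT₀, hT₁]
    exact ae_restrict_mem measurableSet_Icc
  exact ⟨_, T, hT₀, hT₁, hTm, ae_eq_stepFunction_of_tendsto (fun _ => hFt _) (fun _ => htm _)
    (htT.comp hψ.tendsto_atTop) hμ hFf_ae⟩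
end

section
/- Let f₁,…,f_s ∈ L²([0,1]) be an orthonormal family of step functions, and let e₁,…,e_m ∈ L²([0,1]) be an orthonormal family with each e_j orthogonal to every f_i, such that no nonzero linear combination of e₁,…,e_m is (almost everywhere equal to) a step function. Then for every k ≥ 2 there exists a constant c > 0 such that for all (t₁,…,t_k) ∈ Δ_k, G(𝟙_{[t₁,t₂]}, …, 𝟙_{[t_{k−1},t_k]}, f₁, …, f_s, e₁, …, e_m) ≥ c · G(𝟙_{[t₁,t₂]}, …, 𝟙_{[t_{k−1},t_k]}, f₁, …, f_s). -/
open MeasureTheory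

def IsStepFun (g : L2) : Prop :=
  ∃ (n : ℕ) (c a b : Fin n → ℝ),
    ⇑g =ᵐ[μ01] fun x => ∑ i, Set.indicator (Set.Icc (a i) (b i)) (fun _ => c i) x

/-!
Write `x` for the indicators of the intervals `[tᵢ, tᵢ₊₁]` together with the `fᵢ`, and `K` for
their span. Subtracting from each `e_j` its projection onto `K` does not change the big Gram
determinant, and the residuals `z_j` are orthogonal to `K`, so the determinant factors as
`G(x) · G(z)`. For a unit vector `γ`, `‖∑ γ_j z_j‖` is the distance from `∑ γ_j e_j` to a point of
`K`, and every element of `K` is a step function with at most `N` intervals, `N` independent of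
`t`. A limit in `L²` of step functions with at most `N` intervals is again a step function (pass
to an a.e. convergent subsequence along which the endpoints converge), so by compactness of the
unit sphere these distances are bounded below by some `δ > 0`. Hence every eigenvalue of the Gram
matrix of `z` is at least `δ²`, and `c = δ^(2m)` works.
-/

open Filter Set Topology
open scoped RealInnerProductSpace

section Gram

variable {H : Type*} [NormedAddCommGroup H] [InnerProductSpace ℝ H]
  {ι κ : Type*} [Fintype ι] [DecidableEq ι] [Fintype κ] [DecidableEq κ]

omit [DecidableEq ι] [Fintype κ] [DecidableEq κ] in
lemma gram_sum_smul (U : Matrix κ ι ℝ) (v : ι → H) :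
    Matrix.gram ℝ (fun p => ∑ q, U p q • v q) = U * Matrix.gram ℝ v * U.transpose := by
  ext i j
  simp only [Matrix.gram_apply, sum_inner, inner_sum, real_inner_smul_left,
    real_inner_smul_right, Matrix.mul_apply, Matrix.transpose_apply, Finset.sum_mul]
  exact Finset.sum_congr rfl fun _ _ => Finset.sum_congr rfl fun _ _ => by ring

lemma det_gram_sum_elim_of_orthogonal (x : ι → H) (z : κ → H) (h : ∀ i j, ⟪x i, z j⟫ = 0) :
    (Matrix.gram ℝ (Sum.elim x z)).det = (Matrix.gram ℝ x).det * (Matrix.gram ℝ z).det := by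
  have : Matrix.gram ℝ (Sum.elim x z) = .fromBlocks (Matrix.gram ℝ x) 0 0 (Matrix.gram ℝ z) := by
    ext (i | j) (i' | j')
    · rfl
    · exact h i j'
    · exact (real_inner_comm _ _).trans (h i' j)
    · rfl
  rw [this, Matrix.det_fromBlocks_zero₁₂]

lemma det_gram_sum_elim_sub_of_mem_span (x : ι → H) (y w : κ → H)
    (hw : ∀ j, w j ∈ Submodule.span ℝ (range x)) :
    (Matrix.gram ℝ (Sum.elim x (y - w))).det = (Matrix.gram ℝ (Sum.elim x y)).det := by
  choose C hC using fun j => (Submodule.mem_span_range_iff_exists_fun ℝ).mp (hw j)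
  set U : Matrix (ι ⊕ κ) (ι ⊕ κ) ℝ := .fromBlocks 1 0 (-.of C) 1
  have hU : (fun p => ∑ q, U p q • Sum.elim x y q) = Sum.elim x (y - w) := by
    ext (i | j)
    · simp [U, Fintype.sum_sum_type, Matrix.one_apply]
    · simp [U, Fintype.sum_sum_type, Matrix.one_apply, ← hC, sub_eq_neg_add]
  have hdet : U.det = 1 := by simp [U]
  rw [← hU, gram_sum_smul, Matrix.det_mul, Matrix.det_mul, Matrix.det_transpose, hdet, one_mul,
    mul_one]

lemma det_gram_sum_elim_eq_mul (x : ι → H) (e z : κ → H)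
    (hez : ∀ j, e j - z j ∈ Submodule.span ℝ (range x)) (hxz : ∀ i j, ⟪x i, z j⟫ = 0) :
    (Matrix.gram ℝ (Sum.elim x e)).det = (Matrix.gram ℝ x).det * (Matrix.gram ℝ z).det := by
  rw [← det_gram_sum_elim_sub_of_mem_span x e (e - z) hez, sub_sub_cancel,
    det_gram_sum_elim_of_orthogonal x z hxz]

lemma pow_le_det_gram {v : ι → H} {δ : ℝ} (hδ : 0 ≤ δ)
    (h : ∀ γ : EuclideanSpace ℝ ι, ‖γ‖ = 1 → δ ≤ ‖∑ i, γ i • v i‖) :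
    δ ^ (2 * Fintype.card ι) ≤ (Matrix.gram ℝ v).det := by
  have hA := Matrix.isHermitian_gram ℝ v
  have heig : ∀ i, δ ^ 2 ≤ hA.eigenvalues i := fun i => by
    rw [hA.eigenvalues_eq, Matrix.star_dotProduct_gram_mulVec, RCLike.re_to_real,
      real_inner_self_eq_norm_sq]
    exact pow_le_pow_left₀ hδ (h _ (hA.eigenvectorBasis.orthonormal.1 i)) 2
  calc δ ^ (2 * Fintype.card ι) = ∏ _ : ι, δ ^ 2 := by rw [Finset.prod_const, pow_mul]; rfl
    _ ≤ ∏ i, hA.eigenvalues i := Finset.prod_le_prod (fun _ _ => by positivity) fun i _ => heig i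
    _ = (Matrix.gram ℝ v).det := hA.det_eq_prod_eigenvalues.symm

lemma gram_append {n₁ n₂ : ℕ} (x : Fin n₁ → H) (y : Fin n₂ → H) :
    gram (Fin.append x y) = (Matrix.gram ℝ (Sum.elim x y)).det := by
  have : Sum.elim x y = Fin.append x y ∘ finSumFinEquiv := by ext (i | j) <;> simp
  rw [this]
  exact (Matrix.det_submatrix_equiv_self finSumFinEquiv _).symm

lemma mul_det_gram_le_det_gram_sum_elim (x : ι → H) (e : κ → H) {T : Set H}
    (hxT : (Submodule.span ℝ (range x) : Set H) ⊆ T) {δ : ℝ} (hδ : 0 ≤ δ)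
    (heT : ∀ γ : EuclideanSpace ℝ κ, ‖γ‖ = 1 → δ ≤ Metric.infDist (∑ j, γ j • e j) T) :
    δ ^ (2 * Fintype.card κ) * (Matrix.gram ℝ x).det ≤ (Matrix.gram ℝ (Sum.elim x e)).det := by
  set K := Submodule.span ℝ (range x)
  have : FiniteDimensional ℝ K := FiniteDimensional.span_of_finite ℝ (finite_range x)
  set z := fun j => Kᗮ.starProjection (e j)
  have hez : ∀ j, e j - z j ∈ K := fun j => by
    simp [z, K.starProjection_apply_mem (e j)]
  have hxz : ∀ i j, ⟪x i, z j⟫ = 0 := fun i j =>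
    Submodule.inner_right_of_mem_orthogonal (Submodule.subset_span (mem_range_self i))
      (Kᗮ.starProjection_apply_mem (e j))
  have hz : ∀ γ : EuclideanSpace ℝ κ, ‖γ‖ = 1 → δ ≤ ‖∑ j, γ j • z j‖ := fun γ hγ => by
    set v := ∑ j, γ j • e j
    have : ∑ j, γ j • z j = v - K.starProjection v := by
      simp [z, v, smul_sub, Finset.sum_sub_distrib]
    calc δ ≤ Metric.infDist v T := heT γ hγ
      _ ≤ dist v (K.starProjection v) :=
        Metric.infDist_le_dist_of_mem (hxT (K.starProjection_apply_mem v))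
      _ = ‖∑ j, γ j • z j‖ := by rw [this, dist_eq_norm]
  rw [det_gram_sum_elim_eq_mul x e z hez hxz, mul_comm]
  exact mul_le_mul_of_nonneg_left (pow_le_det_gram hδ hz)
    (Matrix.posSemidef_gram ℝ x).det_nonneg

end Gram

lemma exists_pos_le_infDist_sum_smul {E κ : Type*} [NormedAddCommGroup E] [NormedSpace ℝ E]
    [Fintype κ] (e : κ → E) {T : Set E} (hT : T.Nonempty)
    (he : ∀ γ : EuclideanSpace ℝ κ, γ ≠ 0 → ∑ j, γ j • e j ∉ closure T) :
    ∃ δ > 0, ∀ γ : EuclideanSpace ℝ κ, ‖γ‖ = 1 → δ ≤ Metric.infDist (∑ j, γ j • e j) T := by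
  have hcont : Continuous fun γ : EuclideanSpace ℝ κ => Metric.infDist (∑ j, γ j • e j) T := by
    fun_prop
  obtain ⟨δ, hδ, hle⟩ := (isCompact_sphere (0 : EuclideanSpace ℝ κ) 1).exists_forall_le'
    hcont.continuousOn (a := 0) fun γ hγ => by
      rw [← Metric.infDist_pos_iff_notMem_closure hT]
      exact he γ (by rintro rfl; simp at hγ)
  exact ⟨δ, hδ, fun γ hγ => hle γ (by simpa using hγ)⟩

lemma eventually_le_iff_le_of_tendsto {α ν : Type*} [LinearOrder α] [TopologicalSpace α]
    [OrderTopology α] {l : Filter ν} {u : ν → α} {a x y : α} (hu : Tendsto u l (𝓝 a))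
    (ha : a ∉ uIcc x y) : ∀ᶠ n in l, (u n ≤ x ↔ u n ≤ y) ∧ (x ≤ u n ↔ y ≤ u n) := by
  rw [uIcc, mem_Icc, not_and_or, not_le, not_le] at ha
  rcases ha with h | h
  · filter_upwards [hu.eventually (gt_mem_nhds h)] with n hn
    obtain ⟨hx, hy⟩ := lt_inf_iff.mp hn
    exact ⟨iff_of_true hx.le hy.le, iff_of_false hx.not_ge hy.not_ge⟩
  · filter_upwards [hu.eventually (lt_mem_nhds h)] with n hn
    obtain ⟨hx, hy⟩ := sup_lt_iff.mp hn
    exact ⟨iff_of_false hx.not_ge hy.not_ge, iff_of_true hx.le hy.le⟩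

lemma exists_gap_of_notMem {α : Type*} [LinearOrder α] {B : Finset α} {x : α} (hx : x ∉ B)
    (hp : ∃ p ∈ B, p < x) (hr : ∃ r ∈ B, x < r) :
    ∃ p ∈ B, ∃ r ∈ B, x ∈ Ioo p r ∧ ∀ β ∈ B, β ∉ Ioo p r := by
  obtain ⟨p, hpB, hpmax⟩ := (B.filter (· < x)).exists_max_image id
    (by simpa [Finset.Nonempty] using hp)
  obtain ⟨r, hrB, hrmin⟩ := (B.filter (x < ·)).exists_min_image id
    (by simpa [Finset.Nonempty] using hr)
  rw [Finset.mem_filter] at hpB hrB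
  refine ⟨p, hpB.1, r, hrB.1, ⟨hpB.2, hrB.2⟩, fun β hβ hβpr => ?_⟩
  rcases lt_trichotomy β x with hβx | rfl | hxβ
  · exact (hpmax β (Finset.mem_filter.mpr ⟨hβ, hβx⟩)).not_gt hβpr.1
  · exact hx hβ
  · exact (hrmin β (Finset.mem_filter.mpr ⟨hβ, hxβ⟩)).not_gt hβpr.2

lemma eq_of_mem_gap {α : Type*} [LinearOrder α] {B : Finset α} {x p r p' r' : α} (hp : p ∈ B)
    (hr : r ∈ B) (hp' : p' ∈ B) (hr' : r' ∈ B) (hx : x ∈ Ioo p r) (hx' : x ∈ Ioo p' r')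
    (hgap : ∀ β ∈ B, β ∉ Ioo p r) (hgap' : ∀ β ∈ B, β ∉ Ioo p' r') : p = p' ∧ r = r' := by
  refine ⟨le_antisymm ?_ ?_, le_antisymm ?_ ?_⟩ <;> by_contra! h
  · exact hgap' p hp ⟨h, hx.1.trans hx'.2⟩
  · exact hgap p' hp' ⟨h, hx'.1.trans hx.2⟩
  · exact hgap r' hr' ⟨hx.1.trans hx'.2, h⟩
  · exact hgap' r hr ⟨hx'.1.trans hx.2, h⟩

noncomputable def stepSum {ι : Type*} [Fintype ι] (c a b : ι → ℝ) (x : ℝ) : ℝ :=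
  ∑ i, (Icc (a i) (b i)).indicator (fun _ => c i) x

def stepFuns (N : ℕ) : Set L2 :=
  {g | ∃ c a b : Fin N → ℝ, ⇑g =ᵐ[μ01] stepSum c a b}

lemma isStepFun_of_ae_eq_stepSum {ι : Type*} [Fintype ι] {g : L2} {c a b : ι → ℝ}
    (h : ⇑g =ᵐ[μ01] stepSum c a b) : IsStepFun g := by
  set σ := Fintype.equivFin ι
  refine ⟨Fintype.card ι, c ∘ σ.symm, a ∘ σ.symm, b ∘ σ.symm, h.trans (.of_forall fun x => ?_)⟩
  exact (σ.symm.sum_comp fun i => (Icc (a i) (b i)).indicator (fun _ => c i) x).symm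

lemma zero_mem_stepFuns (N : ℕ) : (0 : L2) ∈ stepFuns N :=
  ⟨0, 0, 0, (Lp.coeFn_zero ℝ 2 μ01).trans (.of_forall fun x => by simp [stepSum])⟩

lemma add_mem_stepFuns {g₁ g₂ : L2} {N₁ N₂ : ℕ} (h₁ : g₁ ∈ stepFuns N₁)
    (h₂ : g₂ ∈ stepFuns N₂) : g₁ + g₂ ∈ stepFuns (N₁ + N₂) := by
  obtain ⟨c₁, a₁, b₁, he₁⟩ := h₁
  obtain ⟨c₂, a₂, b₂, he₂⟩ := h₂
  refine ⟨Fin.append c₁ c₂, Fin.append a₁ a₂, Fin.append b₁ b₂, ?_⟩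
  filter_upwards [Lp.coeFn_add g₁ g₂, he₁, he₂] with x hx hx₁ hx₂
  rw [hx, Pi.add_apply, hx₁, hx₂]
  simp [stepSum, Fin.sum_univ_add]

lemma smul_mem_stepFuns {g : L2} {N : ℕ} (r : ℝ) (h : g ∈ stepFuns N) : r • g ∈ stepFuns N := by
  obtain ⟨c, a, b, he⟩ := h
  refine ⟨r • c, a, b, ?_⟩
  filter_upwards [Lp.coeFn_smul r g, he] with x hx hx₁
  rw [hx, Pi.smul_apply, hx₁, smul_eq_mul, stepSum, Finset.mul_sum]
  refine Finset.sum_congr rfl fun i _ => ?_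
  by_cases hm : x ∈ Icc (a i) (b i) <;> simp [hm]

lemma ind_mem_stepFuns (a b : ℝ) : ind a b ∈ stepFuns 1 :=
  ⟨1, fun _ => a, fun _ => b, (indicatorConstLp_coeFn (p := 2)).trans (.of_forall fun x => by
    simp [stepSum])⟩

lemma sum_smul_mem_stepFuns {ι : Type*} [Fintype ι] {y : ι → L2} {N : ι → ℕ}
    (hy : ∀ i, y i ∈ stepFuns (N i)) (d : ι → ℝ) : ∑ i, d i • y i ∈ stepFuns (∑ i, N i) := by
  classical
  suffices ∀ s : Finset ι, ∑ i ∈ s, d i • y i ∈ stepFuns (∑ i ∈ s, N i) from this _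
  intro s
  induction s using Finset.induction_on with
  | empty => exact zero_mem_stepFuns 0
  | insert i s hi hs =>
    rw [Finset.sum_insert hi, Finset.sum_insert hi]
    exact add_mem_stepFuns (smul_mem_stepFuns _ (hy i)) hs

lemma span_subset_stepFuns {ι : Type*} [Fintype ι] {y : ι → L2} {N : ι → ℕ}
    (hy : ∀ i, y i ∈ stepFuns (N i)) :
    (Submodule.span ℝ (range y) : Set L2) ⊆ stepFuns (∑ i, N i) := fun _ hw => by
  obtain ⟨d, rfl⟩ := (Submodule.mem_span_range_iff_exists_fun ℝ).mp hw
  exact sum_smul_mem_stepFuns hy d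

lemma ae_mem_Ioo_notMem (B : Finset ℝ) : ∀ᵐ x ∂μ01, x ∈ Ioo 0 1 ∧ x ∉ B := by
  have hB : ∀ᵐ x ∂μ01, x ∉ ((insert 0 (insert 1 B) : Finset ℝ) : Set ℝ) :=
    ae_restrict_of_ae ((Finset.countable_toSet _).ae_notMem volume)
  filter_upwards [ae_restrict_mem measurableSet_Icc, hB] with x hx hxB
  simp only [Finset.coe_insert, mem_insert_iff, Finset.mem_coe, not_or] at hxB
  exact ⟨⟨hx.1.lt_of_ne (Ne.symm hxB.1), hx.2.lt_of_ne hxB.2.1⟩, hxB.2.2⟩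

lemma exists_ae_eq_stepSum_Icc_zero_one {g : L2} {N : ℕ} (h : g ∈ stepFuns N) :
    ∃ (c : Fin N → ℝ) (a b : Fin N → Icc (0 : ℝ) 1),
      ⇑g =ᵐ[μ01] stepSum c (fun i => a i) (fun i => b i) := by
  obtain ⟨c, a, b, he⟩ := h
  set π := projIcc (0 : ℝ) 1 zero_le_one
  refine ⟨c, π ∘ a, π ∘ b, ?_⟩
  filter_upwards [he, ae_mem_Ioo_notMem ∅] with x hx hxI
  obtain ⟨⟨hx0, hx1⟩, -⟩ := hxI
  rw [hx]
  refine Finset.sum_congr rfl fun i _ => ?_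
  have : x ∈ Icc (a i) (b i) ↔ x ∈ Icc (π (a i) : ℝ) (π (b i)) := by
    simp only [π, mem_Icc, coe_projIcc, max_le_iff, min_le_iff, le_max_iff, le_min_iff]
    grind
  simp only [indicator, Function.comp_apply, this]

lemma eventually_stepSum_eq {ν ι : Type*} [Fintype ι] {l : Filter ν} {a b : ν → ι → ℝ}
    {α β : ι → ℝ} (ha : Tendsto a l (𝓝 α)) (hb : Tendsto b l (𝓝 β)) (c : ν → ι → ℝ) {x y : ℝ}
    (hα : ∀ i, α i ∉ uIcc x y) (hβ : ∀ i, β i ∉ uIcc x y) :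
    ∀ᶠ n in l, stepSum (c n) (a n) (b n) x = stepSum (c n) (a n) (b n) y := by
  have h : ∀ i, ∀ᶠ n in l, (x ∈ Icc (a n i) (b n i) ↔ y ∈ Icc (a n i) (b n i)) := fun i => by
    filter_upwards [eventually_le_iff_le_of_tendsto (tendsto_pi_nhds.mp ha i) (hα i),
      eventually_le_iff_le_of_tendsto (tendsto_pi_nhds.mp hb i) (hβ i)] with n hna hnb
    exact and_congr hna.1 hnb.2
  filter_upwards [eventually_all.mpr h] with n hn
  exact Finset.sum_congr rfl fun i _ => by simp only [indicator, hn i]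

lemma exists_eqOn_stepSum {S : Set ℝ} {B : Finset ℝ} {h : ℝ → ℝ}
    (hS : ∀ x ∈ S, x ∉ B ∧ (∃ p ∈ B, p < x) ∧ ∃ r ∈ B, x < r)
    (hconst : ∀ x ∈ S, ∀ y ∈ S, (∀ β ∈ B, β ∉ uIcc x y) → h x = h y) :
    ∃ c : B × B → ℝ, EqOn h (stepSum c (fun z => z.1) (fun z => z.2)) S := by
  classical
  let IsGapIn (z : B × B) (y : ℝ) : Prop :=
    y ∈ S ∧ y ∈ Ioo (z.1 : ℝ) z.2 ∧ ∀ β ∈ B, β ∉ Ioo (z.1 : ℝ) z.2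
  refine ⟨fun z => if hz : ∃ y, IsGapIn z y then h hz.choose else 0, fun x hx => ?_⟩
  obtain ⟨hxB, hp, hr⟩ := hS x hx
  obtain ⟨p, hpB, r, hrB, hxpr, hgap⟩ := exists_gap_of_notMem hxB hp hr
  rw [stepSum, Fintype.sum_eq_single (⟨p, hpB⟩, ⟨r, hrB⟩)]
  · have hex : ∃ y, IsGapIn (⟨p, hpB⟩, ⟨r, hrB⟩) y := ⟨x, hx, hxpr, hgap⟩
    obtain ⟨hyS, hypr, -⟩ := hex.choose_spec
    rw [indicator_of_mem (Ioo_subset_Icc_self hxpr), dif_pos hex]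
    exact hconst x hx _ hyS fun β hβ hβxy => hgap β hβ (ordConnected_Ioo.uIcc_subset hxpr hypr hβxy)
  · rintro ⟨⟨p', hp'⟩, ⟨r', hr'⟩⟩ hne
    by_cases hz : ∃ y, IsGapIn (⟨p', hp'⟩, ⟨r', hr'⟩) y
    · refine indicator_of_notMem (fun hxI => hne ?_) _
      obtain ⟨-, -, -, hgap'⟩ := hz
      have hxI' : x ∈ Ioo p' r' :=
        ⟨hxI.1.lt_of_ne (fun h => hxB (h ▸ hp')), hxI.2.lt_of_ne (fun h => hxB (h ▸ hr'))⟩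
      obtain ⟨rfl, rfl⟩ := eq_of_mem_gap hpB hrB hp' hr' hxpr hxI' hgap hgap'
      rfl
    · simp [dif_neg hz]

lemma isStepFun_of_ae_tendsto_stepSum {ι : Type*} [Fintype ι] {g : L2} {c a b : ℕ → ι → ℝ}
    {α β : ι → ℝ} (ha : Tendsto a atTop (𝓝 α)) (hb : Tendsto b atTop (𝓝 β))
    (hg : ∀ᵐ x ∂μ01, Tendsto (fun n => stepSum (c n) (a n) (b n) x) atTop (𝓝 (g x))) :
    IsStepFun g := by
  classical
  set B : Finset ℝ := insert 0 (insert 1 (Finset.univ.image α ∪ Finset.univ.image β))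
  set S : Set ℝ := {x | x ∈ Ioo 0 1 ∧ x ∉ B ∧
    Tendsto (fun n => stepSum (c n) (a n) (b n) x) atTop (𝓝 (g x))}
  have hS : ∀ x ∈ S, x ∉ B ∧ (∃ p ∈ B, p < x) ∧ ∃ r ∈ B, x < r := fun x hx =>
    ⟨hx.2.1, ⟨0, by simp [B], hx.1.1⟩, ⟨1, by simp [B], hx.1.2⟩⟩
  have hconst : ∀ x ∈ S, ∀ y ∈ S, (∀ γ ∈ B, γ ∉ uIcc x y) → g x = g y := by
    intro x hx y hy hxy
    have hxy' := eventually_stepSum_eq ha hb c (fun i => hxy _ (by simp [B]))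
      (fun i => hxy _ (by simp [B]))
    exact tendsto_nhds_unique hx.2.2 (hy.2.2.congr' (hxy'.mono fun _ h => h.symm))
  obtain ⟨c', hc'⟩ := exists_eqOn_stepSum hS hconst
  refine isStepFun_of_ae_eq_stepSum (c := c') (a := fun z => z.1) (b := fun z => z.2) ?_
  filter_upwards [ae_mem_Ioo_notMem B, hg] with x hxB hx
  exact hc' ⟨hxB.1, hxB.2, hx⟩

lemma closure_stepFuns_subset (N : ℕ) : closure (stepFuns N) ⊆ {g | IsStepFun g} := by
  intro g hg
  obtain ⟨u, hu, hug⟩ := mem_closure_iff_seq_limit.mp hg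
  choose c a b hab using fun n => exists_ae_eq_stepSum_Icc_zero_one (hu n)
  obtain ⟨ns, hns, hns_ae⟩ := (tendstoInMeasure_of_tendsto_Lp hug).exists_seq_tendsto_ae
  obtain ⟨⟨α, β⟩, -, φ, hφ, hlim⟩ := isCompact_univ.tendsto_subseq
    (x := fun n => (a (ns n), b (ns n))) fun _ => mem_univ _
  have hval : Continuous fun a : Fin N → Icc (0 : ℝ) 1 => fun i => (a i : ℝ) := by fun_prop
  refine isStepFun_of_ae_tendsto_stepSum (c := fun n => c (ns (φ n)))
    ((hval.tendsto α).comp ((continuous_fst.tendsto _).comp hlim))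
    ((hval.tendsto β).comp ((continuous_snd.tendsto _).comp hlim)) ?_
  filter_upwards [hns_ae, ae_all_iff.mpr hab] with x hx hxab
  exact (hx.comp hφ.tendsto_atTop).congr fun n => hxab _

theorem gram_with_orthocomplement_ge_general
    {s m : ℕ} (f : Fin s → L2) (hfstep : ∀ i, IsStepFun (f i))
    (e : Fin m → L2)
    (hnostep : ∀ γ : Fin m → ℝ, γ ≠ 0 → ¬ IsStepFun (∑ j, γ j • e j))
    (k : ℕ) :
    ∃ c : ℝ, 0 < c ∧ ∀ t : Fin (k + 2) → ℝ,
      0 ≤ t 0 → t (Fin.last (k + 1)) ≤ 1 → Monotone t →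
      c * gram (Fin.append (fun j : Fin (k + 1) => ind (t j.castSucc) (t j.succ)) f) ≤
        gram (Fin.append
          (Fin.append (fun j : Fin (k + 1) => ind (t j.castSucc) (t j.succ)) f) e) := by
  choose Nf hNf using hfstep
  set N : Fin (k + 1 + s) → ℕ := Fin.append (fun _ => 1) Nf
  obtain ⟨δ, hδ, hδe⟩ := exists_pos_le_infDist_sum_smul e ⟨0, zero_mem_stepFuns (∑ i, N i)⟩
    fun γ hγ hmem => hnostep γ (by simpa using hγ) (closure_stepFuns_subset _ hmem)
  refine ⟨δ ^ (2 * m), by positivity, fun t _ _ _ => ?_⟩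
  set x := Fin.append (fun j : Fin (k + 1) => ind (t j.castSucc) (t j.succ)) f
  have hx : ∀ i, x i ∈ stepFuns (N i) := Fin.addCases
    (fun j => by simpa [x, N] using ind_mem_stepFuns _ _)
    (fun i => by simp only [x, N, Fin.append_right]; exact hNf i)
  have := mul_det_gram_le_det_gram_sum_elim x e (span_subset_stepFuns hx) hδ.le hδe
  rw [Fintype.card_fin] at this
  rwa [gram_append x e]

/-- Lemma 7. Let `f₁,…,f_s` be an orthonormal family of step functions
and `e₁,…,e_m` an orthonormal family orthogonal to all `f_i` such that no nonzero linear
combination of the `e_j` is a step function. Then for every `k ≥ 2` there is a `c > 0`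
with `G(𝟙_{[t₁,t₂]},…,𝟙_{[t_{k-1},t_k]}, f₁,…,f_s, e₁,…,e_m) ≥
c·G(𝟙_{[t₁,t₂]},…,𝟙_{[t_{k-1},t_k]}, f₁,…,f_s)` for all `(t₁,…,t_k) ∈ Δ_k`. -/
theorem gram_with_orthocomplement_ge
    {s m : ℕ} (f : Fin s → L2) (hf : Orthonormal ℝ f) (hfstep : ∀ i, IsStepFun (f i))
    (e : Fin m → L2) (he : Orthonormal ℝ e)
    (hef : ∀ j i, (inner ℝ (e j) (f i) : ℝ) = 0)
    (hnostep : ∀ γ : Fin m → ℝ, γ ≠ 0 → ¬ IsStepFun (∑ j, γ j • e j))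
    (k : ℕ) :
    ∃ c : ℝ, 0 < c ∧ ∀ t : Fin (k + 2) → ℝ,
      0 ≤ t 0 → t (Fin.last (k + 1)) ≤ 1 → Monotone t →
      c * gram (Fin.append (fun j : Fin (k + 1) => ind (t j.castSucc) (t j.succ)) f) ≤
        gram (Fin.append
          (Fin.append (fun j : Fin (k + 1) => ind (t j.castSucc) (t j.succ)) f) e) :=
  gram_with_orthocomplement_ge_general f hfstep e hnostep k
end
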